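/- Let G be a locally finite simple graph. If an edge set D ⊆ E(G) has finite even intersection with every ⊆-minimal nonempty cut of G having a finite side, then D has finite even intersection with every cut of G having a finite side. -/

import Mathlib

/-!
By local finiteness a cut with a finite side is finite, so it contains a ⊆-minimal nonempty
cut `M` with a finite side. If `F = E(A, V∖A)` and `M = E(B, V∖B)` with `A`, `B` finite, then
`F \ M = E(A ∆ B, V∖(A ∆ B))` is again a cut with a finite side, smaller than `F`; so by
induction on `|F|` the cut `F` is a disjoint union of such minimal cuts, each meeting `D` evenly.
-/

open Set

variable {V : Type*}

/-- The edge set of a cycle of `G` (a finite circuit). -/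
def IsCircuit (G : SimpleGraph V) (C : Set (Sym2 V)) : Prop :=
  ∃ (v : V) (w : G.Walk v v), w.IsCycle ∧ C = {e | e ∈ w.edges}

/-- The cut `E(A, V∖A)`: edges of `G` with exactly one endvertex in `A`. -/
def cutEdges (G : SimpleGraph V) (A : Set V) : Set (Sym2 V) :=
  {e | ∃ x y, G.Adj x y ∧ x ∈ A ∧ y ∉ A ∧ e = s(x, y)}

/-- `C` is a cut of `G`. -/
def IsCut (G : SimpleGraph V) (C : Set (Sym2 V)) : Prop :=
  ∃ A : Set V, C = cutEdges G A

/-- A bond is a ⊆-minimal nonempty cut. -/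
def IsBond (G : SimpleGraph V) (B : Set (Sym2 V)) : Prop :=
  IsCut G B ∧ B ≠ ∅ ∧ ∀ C, IsCut G C → C ≠ ∅ → C ⊆ B → C = B

/-- Two edge sets are orthogonal: their intersection is finite and of even cardinality. -/
def EvenInter (D F : Set (Sym2 V)) : Prop :=
  (D ∩ F).Finite ∧ Even (D ∩ F).ncard

/-- A ray in `G`. -/
def IsRay (G : SimpleGraph V) (R : ℕ → V) : Prop :=
  Function.Injective R ∧ ∀ n, G.Adj (R n) (R (n + 1))

/-- A double ray in `G`. -/
def IsDoubleRay (G : SimpleGraph V) (R : ℤ → V) : Prop :=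
  Function.Injective R ∧ ∀ n, G.Adj (R n) (R (n + 1))

/-- The edge set of a double ray. -/
def doubleRayEdges (R : ℤ → V) : Set (Sym2 V) :=
  {e | ∃ n : ℤ, e = s(R n, R (n + 1))}

/-- `D` is the edge set of some double ray of `G`. -/
def IsDoubleRayEdgeSet (G : SimpleGraph V) (D : Set (Sym2 V)) : Prop :=
  ∃ R : ℤ → V, IsDoubleRay G R ∧ D = doubleRayEdges R

/-- `a` and `b` are joined by a walk of `G` all of whose vertices avoid `S`,
i.e. they lie in a common component of `G − S`. -/
def ConnAvoiding (G : SimpleGraph V) (S : Set V) (a b : V) : Prop :=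
  ∃ w : G.Walk a b, ∀ x ∈ w.support, x ∉ S

/-- `v` lies in `C(S,R)`, the component of `G − S` containing a tail of the ray `R`. -/
def InC (G : SimpleGraph V) (S : Set V) (R : ℕ → V) (v : V) : Prop :=
  ∃ m : ℕ, (∀ n, R (m + n) ∉ S) ∧ ConnAvoiding G S v (R m)

/-- The rays `R` and `R'` are equivalent (lie in the same end): for every finite `S`
some component of `G − S` contains a tail of both. -/
def RayEquiv (G : SimpleGraph V) (R R' : ℕ → V) : Prop :=
  ∀ S : Set V, S.Finite → ∃ m m', (∀ n, R (m + n) ∉ S) ∧ (∀ n, R' (m' + n) ∉ S) ∧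
    ConnAvoiding G S (R m) (R' m')

/-- The sequence `v` of vertices converges to the end of the ray `R`: for every finite `S`
all but finitely many `v i` lie in `C(S,R)`. -/
def ConvergesTo (G : SimpleGraph V) (R : ℕ → V) (v : ℕ → V) : Prop :=
  ∀ S : Set V, S.Finite → {i : ℕ | ¬ InC G S R (v i)}.Finite

/-- `F` is the vertex set of a `k`-fan from `u` to `Y`: a union of `k` paths starting
at `u`, pairwise sharing no vertex other than `u`, ending in `k` distinct vertices of `Y`. -/
def IsFan (G : SimpleGraph V) (k : ℕ) (u : V) (Y : Set V) (F : Set V) : Prop :=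
  ∃ (ends : Fin k → V) (P : ∀ i, G.Walk u (ends i)),
    (∀ i, (P i).IsPath) ∧ (∀ i, ends i ∈ Y) ∧ Function.Injective ends ∧
    (∀ i j, i ≠ j → ∀ x, x ∈ (P i).support → x ∈ (P j).support → x = u) ∧
    F = ⋃ i, {x | x ∈ (P i).support}

/-- `L` is the vertex set of a `k`-linkage from `x` to `y`: a union of `k` paths from
`x` to `y` pairwise sharing no vertices other than `x` and `y`. -/
def IsLinkage (G : SimpleGraph V) (k : ℕ) (x y : V) (L : Set V) : Prop :=
  ∃ P : Fin k → G.Walk x y,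
    (∀ i, (P i).IsPath) ∧ Function.Injective P ∧
    (∀ i j, i ≠ j → ∀ z, z ∈ (P i).support → z ∈ (P j).support → z = x ∨ z = y) ∧
    L = ⋃ i, {z | z ∈ (P i).support}

/-- The end represented by the ray `R` is `k`-padded: for every equivalent ray `R'`
there is a finite `S` such that every vertex of `C(S,R')` admits a `k`-fan to the
image of `R'` in `G`. -/
def IsPaddedEnd (G : SimpleGraph V) (k : ℕ) (R : ℕ → V) : Prop :=
  ∀ R' : ℕ → V, IsRay G R' → RayEquiv G R R' →
    ∃ S : Set V, S.Finite ∧ ∀ v, InC G S R' v → ∃ F, IsFan G k v (Set.range R') F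

/-- `G` is `k`-padded at infinity: every end of `G` is `k`-padded. -/
def PaddedAtInfinity (G : SimpleGraph V) (k : ℕ) : Prop :=
  ∀ R : ℕ → V, IsRay G R → IsPaddedEnd G k R

/-- `G` is `k`-connected: it has more than `k` vertices and deleting fewer than `k`
vertices leaves it connected. -/
def KConnected (G : SimpleGraph V) (k : ℕ) : Prop :=
  (k : ℕ∞) < (Set.univ : Set V).encard ∧
  ∀ S : Set V, S.Finite → S.ncard < k → (G.induce (Sᶜ : Set V)).Connected

/-- The algebraic cycle space: edge sets meeting every vertex in an even number of edges. -/
def CAlg (G : SimpleGraph V) : Set (Set (Sym2 V)) :=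
  {D | D ⊆ G.edgeSet ∧ ∀ v : V, {e ∈ D | v ∈ e}.Finite ∧ Even {e ∈ D | v ∈ e}.ncard}

/-- The finite-cycle space: symmetric-difference sums of finitely many finite circuits. -/
def CFin (G : SimpleGraph V) : Set (Set (Sym2 V)) :=
  {D | ∃ l : List (Set (Sym2 V)), (∀ C ∈ l, IsCircuit G C) ∧ D = l.foldr symmDiff ∅}

/-- A cut of `G` having a finite side. -/
def IsFiniteSideCut (G : SimpleGraph V) (C : Set (Sym2 V)) : Prop :=
  ∃ A : Set V, (A.Finite ∨ (Aᶜ : Set V).Finite) ∧ C = cutEdges G A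

lemma mem_cutEdges_iff (G : SimpleGraph V) (A : Set V) (u v : V) :
    s(u, v) ∈ cutEdges G A ↔ G.Adj u v ∧ ¬(u ∈ A ↔ v ∈ A) := by
  constructor
  · rintro ⟨x, y, hxy, hx, hy, he⟩
    rcases Sym2.eq_iff.1 he with ⟨rfl, rfl⟩ | ⟨rfl, rfl⟩
    · exact ⟨hxy, by tauto⟩
    · exact ⟨hxy.symm, by tauto⟩
  · rintro ⟨hadj, hsep⟩
    by_cases hu : u ∈ A
    · exact ⟨u, v, hadj, hu, by tauto, rfl⟩
    · exact ⟨v, u, hadj.symm, by tauto, hu, Sym2.eq_swap⟩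

lemma cutEdges_compl (G : SimpleGraph V) (A : Set V) : cutEdges G Aᶜ = cutEdges G A := by
  ext e
  induction e using Sym2.ind with
  | _ u v =>
    simp only [mem_cutEdges_iff, Set.mem_compl_iff]
    tauto

lemma cutEdges_symmDiff (G : SimpleGraph V) (A B : Set V) :
    symmDiff (cutEdges G A) (cutEdges G B) = cutEdges G (symmDiff A B) := by
  ext e
  induction e using Sym2.ind with
  | _ u v =>
    simp only [Set.mem_symmDiff, mem_cutEdges_iff]
    tauto

lemma cutEdges_finite {G : SimpleGraph V} (hlf : ∀ v : V, (G.neighborSet v).Finite)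
    {A : Set V} (hA : A.Finite) : (cutEdges G A).Finite := by
  refine (hA.biUnion fun v _ => (hlf v).image fun w => s(v, w)).subset ?_
  rintro e ⟨x, y, hxy, hx, -, rfl⟩
  exact Set.mem_biUnion hx ⟨y, hxy, rfl⟩

namespace IsFiniteSideCut

variable {G : SimpleGraph V} {C M : Set (Sym2 V)}

lemma exists_finite (hC : IsFiniteSideCut G C) : ∃ A : Set V, A.Finite ∧ C = cutEdges G A := by
  obtain ⟨A, hA | hA, rfl⟩ := hC
  · exact ⟨A, hA, rfl⟩
  · exact ⟨Aᶜ, hA, (cutEdges_compl G A).symm⟩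

lemma finite (hlf : ∀ v : V, (G.neighborSet v).Finite) (hC : IsFiniteSideCut G C) : C.Finite := by
  obtain ⟨A, hA, rfl⟩ := hC.exists_finite
  exact cutEdges_finite hlf hA

lemma sdiff (hC : IsFiniteSideCut G C) (hM : IsFiniteSideCut G M) (hMC : M ⊆ C) :
    IsFiniteSideCut G (C \ M) := by
  obtain ⟨A, hA, rfl⟩ := hC.exists_finite
  obtain ⟨B, hB, rfl⟩ := hM.exists_finite
  refine ⟨symmDiff A B, Or.inl ((hA.union hB).subset symmDiff_subset_union), ?_⟩
  rw [← cutEdges_symmDiff, symmDiff_of_ge hMC]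

lemma exists_minimal_subset (hlf : ∀ v : V, (G.neighborSet v).Finite)
    (hC : IsFiniteSideCut G C) (hne : C ≠ ∅) :
    ∃ M ⊆ C, IsFiniteSideCut G M ∧ M ≠ ∅ ∧
      ∀ N, IsFiniteSideCut G N → N ≠ ∅ → N ⊆ M → N = M := by
  let S := {N | IsFiniteSideCut G N ∧ N ≠ ∅ ∧ N ⊆ C}
  have hS : S.Finite := (hC.finite hlf).finite_subsets.subset fun N hN => hN.2.2
  obtain ⟨M, ⟨hM, hMne, hMC⟩, hmin⟩ := hS.exists_minimal ⟨C, hC, hne, subset_rfl⟩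
  exact ⟨M, hMC, hM, hMne, fun N hN hNne hNM =>
    (hmin ⟨hN, hNne, hNM.trans hMC⟩ hNM).antisymm' hNM⟩

end IsFiniteSideCut

lemma EvenInter.of_sdiff {D F M : Set (Sym2 V)} (hMF : M ⊆ F) (hdiff : EvenInter D (F \ M))
    (hM : EvenInter D M) : EvenInter D F := by
  have hsplit : D ∩ F = D ∩ (F \ M) ∪ D ∩ M := by
    rw [← Set.inter_union_distrib_left, Set.sdiff_union_of_subset hMF]
  have hdisj : Disjoint (D ∩ (F \ M)) (D ∩ M) :=
    Set.disjoint_of_subset Set.inter_subset_right Set.inter_subset_right disjoint_sdiff_left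
  rw [EvenInter, hsplit, Set.ncard_union_eq hdisj hdiff.1 hM.1]
  exact ⟨hdiff.1.union hM.1, hdiff.2.add hM.2⟩

theorem stmt_4_general (G : SimpleGraph V) (hlf : ∀ v : V, (G.neighborSet v).Finite)
    (D : Set (Sym2 V))
    (h : ∀ M, IsFiniteSideCut G M → M ≠ ∅ →
      (∀ N, IsFiniteSideCut G N → N ≠ ∅ → N ⊆ M → N = M) → EvenInter D M) :
    ∀ F, IsFiniteSideCut G F → EvenInter D F := by
  intro F hF
  induction hn : F.ncard using Nat.strong_induction_on generalizing F with
  | _ n ih =>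
    by_cases hne : F = ∅
    · simp [hne, EvenInter]
    obtain ⟨M, hMF, hM, hMne, hMmin⟩ := hF.exists_minimal_subset hlf hne
    have hlt : (F \ M).ncard < n :=
      hn ▸ Set.ncard_lt_ncard (hMF.sdiff_ssubset_of_nonempty (Set.nonempty_iff_ne_empty.2 hMne))
        (hF.finite hlf)
    exact (ih _ hlt _ (hF.sdiff hM hMF) rfl).of_sdiff hMF (h M hM hMne hMmin)

/-- In a locally finite graph, if an edge set `D` has finite even intersection with
every ⊆-minimal nonempty cut having a finite side, then it has finite even intersection
with every cut having a finite side. -/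
theorem stmt_4 (G : SimpleGraph V) (hlf : ∀ v : V, (G.neighborSet v).Finite)
    (D : Set (Sym2 V)) (hD : D ⊆ G.edgeSet)
    (h : ∀ M, IsFiniteSideCut G M → M ≠ ∅ →
      (∀ N, IsFiniteSideCut G N → N ≠ ∅ → N ⊆ M → N = M) → EvenInter D M) :
    ∀ F, IsFiniteSideCut G F → EvenInter D F :=
  stmt_4_general G hlf D h
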